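/- arXiv:1306.1515 — 3 statements merged into one kernel-verified Lean document; each statement's English description precedes it below -/
import Mathlib

section
/- ω ∧ ψ = 0 in the exterior algebra Λ_R(M). (This expresses that the special holomorphic cocycle ψ_{q,0} = Σ_{α₁,…,α_q} z_{α₁}⋯z_{α_q} ⊗ ξ_{α₁,1}∧⋯∧ξ_{α_q,q} is closed, ∂ψ_{q,0} = 0, and by the symmetric identity with the roles of the two families of variables exchanged that ψ_{0,q} is closed as well.) -/
/-! `ω = Σ_μ w_μ η_μ` lies in the span of the factors `η_μ` of `ψ`, and wedging a product of
vectors with any one of its factors gives zero. -/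

namespace ExteriorAlgebra

theorem ι_mul_ιMulti_of_mem_span {R M : Type*} [CommRing R] [AddCommGroup M] [Module R M]
    {n : ℕ} (f : Fin n → M) {v : M} (hv : v ∈ Submodule.span R (Set.range f)) :
    ι R v * ιMulti R n f = 0 := by
  induction hv using Submodule.span_induction with
  | mem _ hx =>
    obtain ⟨i, rfl⟩ := hx
    rw [ιMulti_apply, ι_mul_prod_list]
  | zero => rw [map_zero, zero_mul]
  | add _ _ _ _ hx hy => rw [map_add, add_mul, hx, hy, add_zero]
  | smul _ _ _ hx => rw [map_smul, smul_mul_assoc, hx, smul_zero]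

end ExteriorAlgebra

theorem stmt10_general (p q : ℕ)
    (η : Fin q → ExteriorAlgebra (MvPolynomial (Fin p ⊕ Fin q) ℂ)
      ((Fin p × Fin q) → MvPolynomial (Fin p ⊕ Fin q) ℂ))
    (hη : ∀ μ : Fin q, η μ = ∑ α : Fin p,
      (MvPolynomial.X (Sum.inl α) : MvPolynomial (Fin p ⊕ Fin q) ℂ) •
        ExteriorAlgebra.ι (MvPolynomial (Fin p ⊕ Fin q) ℂ)
          (Pi.single (α, μ) 1 : (Fin p × Fin q) → MvPolynomial (Fin p ⊕ Fin q) ℂ))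
    (ψ ω : ExteriorAlgebra (MvPolynomial (Fin p ⊕ Fin q) ℂ)
      ((Fin p × Fin q) → MvPolynomial (Fin p ⊕ Fin q) ℂ))
    (hψ : ψ = ((List.finRange q).map η).prod)
    (hω : ω = ∑ α : Fin p, ∑ μ : Fin q,
      ((MvPolynomial.X (Sum.inl α) * MvPolynomial.X (Sum.inr μ) :
          MvPolynomial (Fin p ⊕ Fin q) ℂ)) •
        ExteriorAlgebra.ι (MvPolynomial (Fin p ⊕ Fin q) ℂ)
          (Pi.single (α, μ) 1 : (Fin p × Fin q) → MvPolynomial (Fin p ⊕ Fin q) ℂ)) :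
    ω * ψ = 0 := by
  set R := MvPolynomial (Fin p ⊕ Fin q) ℂ
  let v : Fin q → (Fin p × Fin q) → R := fun μ =>
    ∑ α : Fin p, (MvPolynomial.X (Sum.inl α) : R) • Pi.single (α, μ) 1
  have hηv : ∀ μ, η μ = ExteriorAlgebra.ι R (v μ) := by
    intro μ
    simp only [hη, v, map_sum, map_smul]
  have hψv : ψ = ExteriorAlgebra.ιMulti R q v := by
    rw [hψ, ExteriorAlgebra.ιMulti_apply, List.ofFn_eq_map]
    exact congrArg List.prod (List.map_congr_left fun μ _ => hηv μ)
  have hωv : ω = ExteriorAlgebra.ι R (∑ μ, (MvPolynomial.X (Sum.inr μ) : R) • v μ) := by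
    simp only [hω, v, map_sum, map_smul, Finset.smul_sum, smul_smul]
    rw [Finset.sum_comm]
    simp only [mul_comm]
  rw [hψv, hωv]
  exact ExteriorAlgebra.ι_mul_ιMulti_of_mem_span v
    (Submodule.sum_mem _ fun μ _ => Submodule.smul_mem _ _ (Submodule.subset_span ⟨μ, rfl⟩))

/-- Let `R` be the polynomial ring over `ℂ` in the `p + q` variables
`z₁, …, z_p` (indexed by `Sum.inl`) and `w₁, …, w_q` (indexed by `Sum.inr`), and let
`M` be the free `R`-module with basis `ξ_{α,μ}`, `(α,μ) ∈ {1,…,p}×{1,…,q}`,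
realized as `(Fin p × Fin q) → R` with basis the functions `Pi.single (α,μ) 1`.
In the exterior algebra `Λ_R(M)`, setting `η_μ = Σ_α z_α·ξ_{α,μ}`,
`ψ = η₁ ∧ ⋯ ∧ η_q` and `ω = Σ_{α,μ} (z_α·w_μ)·ξ_{α,μ}`, one has `ω ∧ ψ = 0`.
(This expresses that the special holomorphic cocycle `ψ_{q,0}` is closed,
`∂ψ_{q,0} = 0`, and, by symmetry, that `ψ_{0,q}` is closed as well.) -/
theorem stmt10 (p q : ℕ) (hp : 0 < p) (hq : 0 < q)
    (η : Fin q → ExteriorAlgebra (MvPolynomial (Fin p ⊕ Fin q) ℂ)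
      ((Fin p × Fin q) → MvPolynomial (Fin p ⊕ Fin q) ℂ))
    (hη : ∀ μ : Fin q, η μ = ∑ α : Fin p,
      (MvPolynomial.X (Sum.inl α) : MvPolynomial (Fin p ⊕ Fin q) ℂ) •
        ExteriorAlgebra.ι (MvPolynomial (Fin p ⊕ Fin q) ℂ)
          (Pi.single (α, μ) 1 : (Fin p × Fin q) → MvPolynomial (Fin p ⊕ Fin q) ℂ))
    (ψ ω : ExteriorAlgebra (MvPolynomial (Fin p ⊕ Fin q) ℂ)
      ((Fin p × Fin q) → MvPolynomial (Fin p ⊕ Fin q) ℂ))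
    (hψ : ψ = ((List.finRange q).map η).prod)
    (hω : ω = ∑ α : Fin p, ∑ μ : Fin q,
      ((MvPolynomial.X (Sum.inl α) * MvPolynomial.X (Sum.inr μ) :
          MvPolynomial (Fin p ⊕ Fin q) ℂ)) •
        ExteriorAlgebra.ι (MvPolynomial (Fin p ⊕ Fin q) ℂ)
          (Pi.single (α, μ) 1 : (Fin p × Fin q) → MvPolynomial (Fin p ⊕ Fin q) ℂ)) :
    ω * ψ = 0 :=
  stmt10_general p q η hη ψ ω hψ hω
end

section
/- Λ(π)(ψ_{bq,0}) = det((Z_{β,j})_{1≤β,j≤b})^q · ⋀_{(β,μ)} ζ_{β,μ}, where the wedge on the right is over all (β,μ) ∈ {1,…,b}×{1,…,q} taken in lexicographic order. (This is the evaluation ψ_{bq,0}(e(bq,0)) = Δ_b(𝐲'')^q of the special cocycle of Hodge type (bq,0) on the Vogan–Zuckerman vector: it equals the q-th power of the determinant of the top b×b block of the matrix of variables.) -/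
set_option synthInstance.maxHeartbeats 1000000
set_option maxHeartbeats 1000000

open Finset in
lemma alt_det_smul {R M N : Type*} [CommRing R] [AddCommGroup M] [Module R M]
    [AddCommGroup N] [Module R N] {ι : Type*} [Fintype ι] [DecidableEq ι]
    (f : M [⋀^ι]→ₗ[R] N) (A : Matrix ι ι R) (v : ι → M) :
    (f fun i => ∑ j, A i j • v j) = A.det • f v := by
  have h1 : (f fun i => ∑ j, A i j • v j)
      = ∑ r : ι → ι, f fun i => A i (r i) • v (r i) :=
    f.toMultilinearMap.map_sum (g := fun i j => A i j • v j)
  have h2 : ∀ r : ι → ι, (f fun i => A i (r i) • v (r i))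
      = (∏ i, A i (r i)) • f (v ∘ r) := fun r =>
    f.toMultilinearMap.map_smul_univ _ _
  rw [h1]
  simp_rw [h2]
  calc
    ∑ r : ι → ι, (∏ i, A i (r i)) • f (v ∘ r)
        = ∑ r ∈ univ.filter (fun r : ι → ι => Function.Bijective r),
            (∏ i, A i (r i)) • f (v ∘ r) := by
          refine (sum_subset (filter_subset _ _) ?_).symm
          intro r _ hr
          simp only [mem_filter, mem_univ, true_and] at hr
          obtain ⟨i, j, hij, hne⟩ : ∃ i j, r i = r j ∧ i ≠ j := by
            rw [← Finite.injective_iff_bijective, Function.Injective] at hr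
            push_neg at hr; exact hr
          rw [f.map_eq_zero_of_eq (v ∘ r) (i := i) (j := j) (by simp [hij]) hne, smul_zero]
    _ = ∑ σ : Equiv.Perm ι, (∏ i, A i (σ i)) • f (v ∘ σ) :=
        sum_bij (fun p h => Equiv.ofBijective p (mem_filter.1 h).2) (fun _ _ => mem_univ _)
          (fun _ _ _ _ h => by injection h)
          (fun b _ => ⟨b, mem_filter.2 ⟨mem_univ _, b.bijective⟩,
            Equiv.coe_fn_injective rfl⟩) (fun _ _ => rfl)
    _ = A.det • f v := by
        rw [← Matrix.det_transpose, Matrix.det_apply, Finset.sum_smul]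
        refine Finset.sum_congr rfl fun σ _ => ?_
        rw [f.map_perm v σ]
        simp only [Matrix.transpose_apply, Units.smul_def, ← Int.cast_smul_eq_zsmul R,
          smul_smul, smul_eq_mul]
        ring_nf

lemma flatMap_eq_ofFn {α : Type*} (b q : ℕ) (h : Fin b × Fin q → α) :
    (List.finRange b).flatMap (fun j => (List.finRange q).map (fun μ => h (j, μ))) =
      List.ofFn (fun k : Fin (b * q) => h (finProdFinEquiv.symm k)) := by
  rw [List.ofFn_mul, List.flatMap_def, List.ofFn_eq_map]
  congr 1
  apply List.map_congr_left
  intro j _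
  rw [List.ofFn_eq_map]
  apply List.map_congr_left
  intro μ _
  congr 1
  rw [eq_comm, Equiv.symm_apply_eq]
  apply Fin.ext
  show (j : ℕ) * q + μ = (μ : ℕ) + q * j
  ring

/-- Fix `0 < b ≤ p` and `0 < q`.  Let `R` be the polynomial ring over
`ℂ` in the variables `Z_{α,j}`, `(α,j) ∈ {1,…,p}×{1,…,b}`, let `M` (resp. `N`) be the
free `R`-module with basis `ξ_{α,μ}`, `(α,μ) ∈ {1,…,p}×{1,…,q}` (resp. `ζ_{β,μ}`,
`(β,μ) ∈ {1,…,b}×{1,…,q}`), realized as function spaces with basis the `Pi.single`s.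
Let `π : M → N` be the `R`-linear map with `π ξ_{α,μ} = ζ_{α,μ}` for `α ≤ b` and
`π ξ_{α,μ} = 0` for `α > b`, and `Λ(π)` the induced homomorphism of exterior algebras
(the `R`-algebra homomorphism with `Λ(π)(ι m) = ι (π m)`).  With
`ψ_{bq,0} = ∏_{(j,μ) lex} (Σ_α Z_{α,j}·ξ_{α,μ})`, one has
`Λ(π)(ψ_{bq,0}) = det((Z_{β,j})_{β,j≤b})^q · ⋀_{(β,μ) lex} ζ_{β,μ}`. -/
theorem stmt11 (p q b : ℕ) (hp : 0 < p) (hq : 0 < q) (hb : 0 < b) (hbp : b ≤ p)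
    (π : ((Fin p × Fin q) → MvPolynomial (Fin p × Fin b) ℂ)
      →ₗ[MvPolynomial (Fin p × Fin b) ℂ]
        ((Fin b × Fin q) → MvPolynomial (Fin p × Fin b) ℂ))
    (hπ : ∀ (α : Fin p) (μ : Fin q),
      π (Pi.single (α, μ) 1 : (Fin p × Fin q) → MvPolynomial (Fin p × Fin b) ℂ) =
        if h : (α : ℕ) < b then
          (Pi.single (⟨(α : ℕ), h⟩, μ) 1 : (Fin b × Fin q) → MvPolynomial (Fin p × Fin b) ℂ)
        else 0)
    (Λπ : ExteriorAlgebra (MvPolynomial (Fin p × Fin b) ℂ)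
        ((Fin p × Fin q) → MvPolynomial (Fin p × Fin b) ℂ)
      →ₐ[MvPolynomial (Fin p × Fin b) ℂ]
        ExteriorAlgebra (MvPolynomial (Fin p × Fin b) ℂ)
          ((Fin b × Fin q) → MvPolynomial (Fin p × Fin b) ℂ))
    (hΛπ : ∀ m : (Fin p × Fin q) → MvPolynomial (Fin p × Fin b) ℂ,
      Λπ (ExteriorAlgebra.ι (MvPolynomial (Fin p × Fin b) ℂ) m) =
        ExteriorAlgebra.ι (MvPolynomial (Fin p × Fin b) ℂ) (π m))
    (ψ : ExteriorAlgebra (MvPolynomial (Fin p × Fin b) ℂ)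
      ((Fin p × Fin q) → MvPolynomial (Fin p × Fin b) ℂ))
    (hψ : ψ = ((List.finRange b).flatMap (fun j : Fin b => (List.finRange q).map
      (fun μ : Fin q => ∑ α : Fin p,
        (MvPolynomial.X (α, j) : MvPolynomial (Fin p × Fin b) ℂ) •
          ExteriorAlgebra.ι (MvPolynomial (Fin p × Fin b) ℂ)
            (Pi.single (α, μ) 1 :
              (Fin p × Fin q) → MvPolynomial (Fin p × Fin b) ℂ)))).prod) :
    Λπ ψ =
      (Matrix.det (Matrix.of fun (β j : Fin b) =>
          (MvPolynomial.X ((⟨(β : ℕ), lt_of_lt_of_le β.isLt hbp⟩ : Fin p), j) :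
            MvPolynomial (Fin p × Fin b) ℂ)) ^ q) •
        ((List.finRange b).flatMap (fun β : Fin b => (List.finRange q).map
          (fun μ : Fin q =>
            ExteriorAlgebra.ι (MvPolynomial (Fin p × Fin b) ℂ)
              (Pi.single (β, μ) 1 :
                (Fin b × Fin q) → MvPolynomial (Fin p × Fin b) ℂ)))).prod := by
  classical
  set R : Type := MvPolynomial (Fin p × Fin b) ℂ with hR
  set N : Type := (Fin b × Fin q) → R with hN
  -- target basis vectors and mixed vectors
  set Z : Fin b × Fin q → N := fun x => Pi.single x 1 with hZ
  set W : Fin b × Fin q → N := fun x =>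
    ∑ β : Fin b, (MvPolynomial.X ((⟨(β : ℕ), lt_of_lt_of_le β.isLt hbp⟩ : Fin p), x.1) : R)
      • Z (β, x.2) with hW
  set Xmat : Matrix (Fin b) (Fin b) R := Matrix.of fun (β j : Fin b) =>
    (MvPolynomial.X ((⟨(β : ℕ), lt_of_lt_of_le β.isLt hbp⟩ : Fin p), j) : R) with hXmat
  -- Step 1: Λπ ψ = product of ι (W (j, μ))
  have key : ∀ (j : Fin b) (μ : Fin q),
      Λπ (∑ α : Fin p, (MvPolynomial.X (α, j) : R) •
          ExteriorAlgebra.ι R (Pi.single (α, μ) 1 : (Fin p × Fin q) → R)) =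
        ExteriorAlgebra.ι R (W (j, μ)) := by
    intro j μ
    rw [map_sum]
    simp_rw [map_smul, hΛπ, hπ]
    have : ∀ α : Fin p, (MvPolynomial.X (α, j) : R) •
        ExteriorAlgebra.ι R (if h : (α : ℕ) < b then
          (Pi.single ((⟨(α : ℕ), h⟩ : Fin b), μ) 1 : N) else 0) =
        ExteriorAlgebra.ι R ((MvPolynomial.X (α, j) : R) • (if h : (α : ℕ) < b then
          (Pi.single ((⟨(α : ℕ), h⟩ : Fin b), μ) 1 : N) else 0)) := by
      intro α; rw [map_smul]
    simp_rw [this, ← map_sum]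
    congr 1
    rw [hW]
    have hsub : (Finset.univ : Finset (Fin p)).sum
          (fun α => (MvPolynomial.X (α, j) : R) • (if h : (α : ℕ) < b then
            (Pi.single ((⟨(α : ℕ), h⟩ : Fin b), μ) 1 : N) else 0)) =
        ((Finset.univ : Finset (Fin b)).map (Fin.castLEEmb hbp)).sum
          (fun α => (MvPolynomial.X (α, j) : R) • (if h : (α : ℕ) < b then
            (Pi.single ((⟨(α : ℕ), h⟩ : Fin b), μ) 1 : N) else 0)) := by
      refine (Finset.sum_subset (Finset.subset_univ _) ?_).symm
      intro α _ hα
      have : ¬ ((α : ℕ) < b) := by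
        intro hlt
        exact hα (Finset.mem_map.2 ⟨⟨(α : ℕ), hlt⟩, Finset.mem_univ _, Fin.ext rfl⟩)
      rw [dif_neg this, smul_zero]
    rw [hsub, Finset.sum_map]
    refine Finset.sum_congr rfl fun β _ => ?_
    have hβ : ((Fin.castLEEmb hbp β : Fin p) : ℕ) < b := β.isLt
    rw [dif_pos hβ]
    congr 1
  rw [hψ, map_list_prod, List.map_flatMap]
  simp_rw [List.map_map]
  have hlist : (fun j : Fin b => List.map (Λπ ∘ fun μ : Fin q =>
        ∑ α : Fin p, (MvPolynomial.X (α, j) : R) •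
          ExteriorAlgebra.ι R (Pi.single (α, μ) 1 : (Fin p × Fin q) → R)) (List.finRange q)) =
      (fun j : Fin b => List.map (fun μ : Fin q =>
        ExteriorAlgebra.ι R (W (j, μ))) (List.finRange q)) := by
    funext j
    refine List.map_congr_left fun μ _ => ?_
    exact key j μ
  rw [hlist]
  -- convert both sides to ιMulti
  rw [flatMap_eq_ofFn b q (fun x => ExteriorAlgebra.ι R (W x)),
    flatMap_eq_ofFn b q (fun x => ExteriorAlgebra.ι R (Z x)),
    ← ExteriorAlgebra.ιMulti_apply, ← ExteriorAlgebra.ιMulti_apply]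
  -- the big matrix
  set e : Fin (b * q) ≃ Fin b × Fin q := finProdFinEquiv.symm with he
  set A : Matrix (Fin b × Fin q) (Fin b × Fin q) R :=
    Matrix.blockDiagonal (fun _ : Fin q => Xmat.transpose) with hA
  have hWA : ∀ x : Fin b × Fin q, W x = ∑ y : Fin b × Fin q, A x y • Z y := by
    rintro ⟨j, μ⟩
    rw [Fintype.sum_prod_type]
    simp only [hA, Matrix.blockDiagonal_apply, Matrix.transpose_apply, ite_smul, zero_smul,
      Finset.sum_ite_eq, Finset.mem_univ, if_true]
    rfl
  have hform : (fun k => W (e k)) = fun k => ∑ l, (A.submatrix e e) k l • (Z ∘ e) l := by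
    funext k
    rw [hWA (e k)]
    exact (Equiv.sum_comp e (fun y => A (e k) y • Z y)).symm
  rw [hform, alt_det_smul, Matrix.det_submatrix_equiv_self, hA, Matrix.det_blockDiagonal]
  simp only [Matrix.det_transpose, Finset.prod_const, Finset.card_univ, Fintype.card_fin]
  rfl
end

section
/- The +i-eigenspace of K equals the ℂ-linear span of Φ(V₊' × W₊') ∪ Φ(V₊'' × W₋'') ∪ Φ(V₋'' × W₊'') ∪ Φ(V₋' × W₋'), and the −i-eigenspace of K equals the ℂ-linear span of Φ(V₊'' × W₊'') ∪ Φ(V₊' × W₋') ∪ Φ(V₋' × W₊') ∪ Φ(V₋'' × W₋''); moreover (V⊗ℂW)⊗ℝℂ is the internal direct sum of these two eigenspaces. -/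
open TensorProduct

/-- For a complex vector space `U` with complexification `ℂ ⊗[ℝ] U` and an idempotent
`p` (one of `p'_U`, `p''_U`), and a complex subspace `U₀ ⊆ U`, this is the subspace
`p (U₀ ⊗ℝ ℂ)` of `ℂ ⊗[ℝ] U`, i.e. `U₀'` (resp. `U₀''`) when `p = p'_U`
(resp. `p = p''_U`). -/
noncomputable def primePart {V : Type*} [AddCommGroup V] [Module ℝ V] [Module ℂ V]
    (p : (ℂ ⊗[ℝ] V) →ₗ[ℂ] (ℂ ⊗[ℝ] V)) (U : Submodule ℂ V) :
    Submodule ℂ (ℂ ⊗[ℝ] V) :=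
  Submodule.map p (Submodule.span ℂ {x : ℂ ⊗[ℝ] V | ∃ z : ℂ, ∃ u ∈ U, x = z ⊗ₜ[ℝ] u})

private lemma aux_span {M N P : Type*} [AddCommGroup M] [AddCommGroup N] [AddCommGroup P]
    [Module ℂ M] [Module ℂ N] [Module ℂ P]
    (B : M →ₗ[ℂ] N →ₗ[ℂ] P) (F : P →ₗ[ℂ] P) (μ : ℂ) (S : Set M) (T : Set N)
    (hST : ∀ s ∈ S, ∀ t ∈ T, F (B s t) = μ • B s t) :
    ∀ x ∈ Submodule.span ℂ S, ∀ y ∈ Submodule.span ℂ T, F (B x y) = μ • B x y := by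
  intro x hx
  induction hx using Submodule.span_induction with
  | mem s hs =>
    intro y hy
    induction hy using Submodule.span_induction with
    | mem t ht => exact hST s hs t ht
    | zero => simp
    | add a b _ _ ha hb => simp only [map_add, ha, hb, smul_add]
    | smul c a _ ha =>
      simp only [map_smul, ha]
      rw [smul_comm]
  | zero => intro y hy; simp
  | add a b _ _ ha hb =>
    intro y hy
    simp only [map_add, LinearMap.add_apply, ha y hy, hb y hy, smul_add]
  | smul c a _ ha =>
    intro y hy
    simp only [map_smul, LinearMap.smul_apply, ha y hy]
    rw [smul_comm]

set_option maxHeartbeats 2000000 in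
/-- Let `V`, `W` be finite-dimensional complex Hermitian spaces with
orthogonal decompositions `V = V₊ ⊕ V₋`, `W = W₊ ⊕ W₋` into positive- and
negative-definite subspaces, `θ_V`, `θ_W` the associated Cartan involutions,
`J₀ = i·(θ_V ⊗ θ_W)` on `V ⊗ℂ W` and `K = J₀ ⊗ 1` the induced ℂ-linear operator on
the complexification `ℂ ⊗[ℝ] (V ⊗[ℂ] W)`.  Then the `+i`-eigenspace of `K` is the
ℂ-span of `Φ(V₊' × W₊') ∪ Φ(V₊'' × W₋'') ∪ Φ(V₋'' × W₊'') ∪ Φ(V₋' × W₋')`, the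
`−i`-eigenspace of `K` is the ℂ-span of
`Φ(V₊'' × W₊'') ∪ Φ(V₊' × W₋') ∪ Φ(V₋' × W₊') ∪ Φ(V₋'' × W₋'')`, and
`ℂ ⊗[ℝ] (V ⊗[ℂ] W)` is the internal direct sum of these two eigenspaces. -/
theorem stmt16 {V W : Type*}
    [AddCommGroup V] [Module ℝ V] [Module ℂ V] [IsScalarTower ℝ ℂ V]
    [FiniteDimensional ℂ V]
    [AddCommGroup W] [Module ℝ W] [Module ℂ W] [IsScalarTower ℝ ℂ W]
    [FiniteDimensional ℂ W]
    (hV : V → V → ℂ) (hW : W → W → ℂ)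
    (hVadd : ∀ v₁ v₂ w : V, hV (v₁ + v₂) w = hV v₁ w + hV v₂ w)
    (hVsmul : ∀ (a : ℂ) (v w : V), hV (a • v) w = a * hV v w)
    (hVconj : ∀ v w : V, hV w v = (starRingEnd ℂ) (hV v w))
    (hWadd : ∀ v₁ v₂ w : W, hW (v₁ + v₂) w = hW v₁ w + hW v₂ w)
    (hWsmul : ∀ (a : ℂ) (v w : W), hW (a • v) w = a * hW v w)
    (hWconj : ∀ v w : W, hW w v = (starRingEnd ℂ) (hW v w))
    (Vp Vm : Submodule ℂ V) (hVcompl : IsCompl Vp Vm)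
    (hVorth : ∀ v ∈ Vp, ∀ w ∈ Vm, hV v w = 0)
    (hVpos : ∀ v ∈ Vp, v ≠ 0 → 0 < (hV v v).re)
    (hVneg : ∀ v ∈ Vm, v ≠ 0 → (hV v v).re < 0)
    (Wp Wm : Submodule ℂ W) (hWcompl : IsCompl Wp Wm)
    (hWorth : ∀ v ∈ Wp, ∀ w ∈ Wm, hW v w = 0)
    (hWpos : ∀ v ∈ Wp, v ≠ 0 → 0 < (hW v v).re)
    (hWneg : ∀ v ∈ Wm, v ≠ 0 → (hW v v).re < 0)
    (θV : V →ₗ[ℂ] V) (hθVp : ∀ v ∈ Vp, θV v = v) (hθVm : ∀ v ∈ Vm, θV v = -v)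
    (θW : W →ₗ[ℂ] W) (hθWp : ∀ w ∈ Wp, θW w = w) (hθWm : ∀ w ∈ Wm, θW w = -w)
    (p'V p''V : (ℂ ⊗[ℝ] V) →ₗ[ℂ] (ℂ ⊗[ℝ] V))
    (hp'V : ∀ (z : ℂ) (u : V),
      p'V (z ⊗ₜ[ℝ] u) = (1/2 : ℂ) • (z ⊗ₜ[ℝ] u - (Complex.I * z) ⊗ₜ[ℝ] (Complex.I • u)))
    (hp''V : ∀ (z : ℂ) (u : V),
      p''V (z ⊗ₜ[ℝ] u) = (1/2 : ℂ) • (z ⊗ₜ[ℝ] u + (Complex.I * z) ⊗ₜ[ℝ] (Complex.I • u)))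
    (p'W p''W : (ℂ ⊗[ℝ] W) →ₗ[ℂ] (ℂ ⊗[ℝ] W))
    (hp'W : ∀ (z : ℂ) (u : W),
      p'W (z ⊗ₜ[ℝ] u) = (1/2 : ℂ) • (z ⊗ₜ[ℝ] u - (Complex.I * z) ⊗ₜ[ℝ] (Complex.I • u)))
    (hp''W : ∀ (z : ℂ) (u : W),
      p''W (z ⊗ₜ[ℝ] u) = (1/2 : ℂ) • (z ⊗ₜ[ℝ] u + (Complex.I * z) ⊗ₜ[ℝ] (Complex.I • u)))
    (Φ : (ℂ ⊗[ℝ] V) →ₗ[ℂ] (ℂ ⊗[ℝ] W) →ₗ[ℂ] (ℂ ⊗[ℝ] (V ⊗[ℂ] W)))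
    (hΦ : ∀ (a b : ℂ) (v : V) (w : W),
      Φ (a ⊗ₜ[ℝ] v) (b ⊗ₜ[ℝ] w) = (a * b) ⊗ₜ[ℝ] (v ⊗ₜ[ℂ] w))
    (K : (ℂ ⊗[ℝ] (V ⊗[ℂ] W)) →ₗ[ℂ] (ℂ ⊗[ℝ] (V ⊗[ℂ] W)))
    (hK : ∀ (z : ℂ) (u : V ⊗[ℂ] W),
      K (z ⊗ₜ[ℝ] u) = z ⊗ₜ[ℝ] (Complex.I • (TensorProduct.map θV θW) u))
    (Splus Sminus : Submodule ℂ (ℂ ⊗[ℝ] (V ⊗[ℂ] W)))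
    (hSplus : Splus = Submodule.span ℂ
      (Set.image2 (fun x y => Φ x y)
          (primePart p'V Vp : Set (ℂ ⊗[ℝ] V)) (primePart p'W Wp : Set (ℂ ⊗[ℝ] W)) ∪
        Set.image2 (fun x y => Φ x y)
          (primePart p''V Vp : Set (ℂ ⊗[ℝ] V)) (primePart p''W Wm : Set (ℂ ⊗[ℝ] W)) ∪
        Set.image2 (fun x y => Φ x y)
          (primePart p''V Vm : Set (ℂ ⊗[ℝ] V)) (primePart p''W Wp : Set (ℂ ⊗[ℝ] W)) ∪
        Set.image2 (fun x y => Φ x y)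
          (primePart p'V Vm : Set (ℂ ⊗[ℝ] V)) (primePart p'W Wm : Set (ℂ ⊗[ℝ] W))))
    (hSminus : Sminus = Submodule.span ℂ
      (Set.image2 (fun x y => Φ x y)
          (primePart p''V Vp : Set (ℂ ⊗[ℝ] V)) (primePart p''W Wp : Set (ℂ ⊗[ℝ] W)) ∪
        Set.image2 (fun x y => Φ x y)
          (primePart p'V Vp : Set (ℂ ⊗[ℝ] V)) (primePart p'W Wm : Set (ℂ ⊗[ℝ] W)) ∪
        Set.image2 (fun x y => Φ x y)
          (primePart p'V Vm : Set (ℂ ⊗[ℝ] V)) (primePart p'W Wp : Set (ℂ ⊗[ℝ] W)) ∪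
        Set.image2 (fun x y => Φ x y)
          (primePart p''V Vm : Set (ℂ ⊗[ℝ] V)) (primePart p''W Wm : Set (ℂ ⊗[ℝ] W)))) :
    (∀ x : ℂ ⊗[ℝ] (V ⊗[ℂ] W), x ∈ Splus ↔ K x = Complex.I • x) ∧
    (∀ x : ℂ ⊗[ℝ] (V ⊗[ℂ] W), x ∈ Sminus ↔ K x = (-Complex.I) • x) ∧
    IsCompl Splus Sminus := by
  classical
  have ht : ∀ (c : ℂ) (x : V ⊗[ℂ] W),
      c ⊗ₜ[ℝ] x = c • (TensorProduct.mk ℝ ℂ (V ⊗[ℂ] W)) 1 x := by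
    intro c x
    rw [TensorProduct.mk_apply, TensorProduct.smul_tmul', smul_eq_mul, mul_one]
  -- product formulas for Φ applied to the projections
  have hPhi' : ∀ (z b : ℂ) (v : V) (w : W),
      Φ (p'V (z ⊗ₜ[ℝ] v)) (p'W (b ⊗ₜ[ℝ] w)) =
        (1/2 : ℂ) • ((z * b) ⊗ₜ[ℝ] (v ⊗ₜ[ℂ] w)
          - (Complex.I * (z * b)) ⊗ₜ[ℝ] (Complex.I • (v ⊗ₜ[ℂ] w))) := by
    intro z b v w
    rw [hp'V, hp'W]
    simp only [map_smul, LinearMap.smul_apply, map_sub, LinearMap.sub_apply, hΦ,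
      TensorProduct.smul_tmul, TensorProduct.tmul_smul, smul_smul, Complex.I_mul_I,
      neg_one_smul, TensorProduct.tmul_neg, ht]
    simp only [map_neg, smul_neg]
    match_scalars <;> first | ring1 | (ring_nf; simp [Complex.I_sq]; try ring1)
  have hPhi'' : ∀ (z b : ℂ) (v : V) (w : W),
      Φ (p''V (z ⊗ₜ[ℝ] v)) (p''W (b ⊗ₜ[ℝ] w)) =
        (1/2 : ℂ) • ((z * b) ⊗ₜ[ℝ] (v ⊗ₜ[ℂ] w)
          + (Complex.I * (z * b)) ⊗ₜ[ℝ] (Complex.I • (v ⊗ₜ[ℂ] w))) := by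
    intro z b v w
    rw [hp''V, hp''W]
    simp only [map_smul, LinearMap.smul_apply, map_add, LinearMap.add_apply, hΦ,
      TensorProduct.smul_tmul, TensorProduct.tmul_smul, smul_smul, Complex.I_mul_I,
      neg_one_smul, TensorProduct.tmul_neg, ht]
    simp only [map_neg, smul_neg]
    match_scalars <;> first | ring1 | (ring_nf; simp [Complex.I_sq]; try ring1)
  -- action of K on the basic elements
  have hKe'p : ∀ (c : ℂ) (u : V ⊗[ℂ] W), (TensorProduct.map θV θW) u = u →
      K ((1/2 : ℂ) • (c ⊗ₜ[ℝ] u - (Complex.I * c) ⊗ₜ[ℝ] (Complex.I • u))) =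
        Complex.I • ((1/2 : ℂ) • (c ⊗ₜ[ℝ] u - (Complex.I * c) ⊗ₜ[ℝ] (Complex.I • u))) := by
    intro c u hu
    simp only [map_smul, map_sub, hK]
    simp only [map_smul, hu, smul_smul, Complex.I_mul_I, neg_one_smul,
      TensorProduct.tmul_neg, smul_neg, neg_neg, map_neg]
    simp only [ht, map_neg, smul_neg]
    match_scalars <;> first | ring1 | (ring_nf; simp [Complex.I_sq]; try ring1)
  have hKe'm : ∀ (c : ℂ) (u : V ⊗[ℂ] W), (TensorProduct.map θV θW) u = -u →
      K ((1/2 : ℂ) • (c ⊗ₜ[ℝ] u - (Complex.I * c) ⊗ₜ[ℝ] (Complex.I • u))) =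
        (-Complex.I) • ((1/2 : ℂ) • (c ⊗ₜ[ℝ] u - (Complex.I * c) ⊗ₜ[ℝ] (Complex.I • u))) := by
    intro c u hu
    simp only [map_smul, map_sub, hK]
    simp only [map_smul, hu, smul_smul, Complex.I_mul_I, neg_one_smul,
      TensorProduct.tmul_neg, smul_neg, neg_neg, map_neg]
    simp only [ht, map_neg, smul_neg]
    match_scalars <;> first | ring1 | (ring_nf; simp [Complex.I_sq]; try ring1)
  have hKe''p : ∀ (c : ℂ) (u : V ⊗[ℂ] W), (TensorProduct.map θV θW) u = u →
      K ((1/2 : ℂ) • (c ⊗ₜ[ℝ] u + (Complex.I * c) ⊗ₜ[ℝ] (Complex.I • u))) =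
        (-Complex.I) • ((1/2 : ℂ) • (c ⊗ₜ[ℝ] u + (Complex.I * c) ⊗ₜ[ℝ] (Complex.I • u))) := by
    intro c u hu
    simp only [map_smul, map_add, hK]
    simp only [map_smul, hu, smul_smul, Complex.I_mul_I, neg_one_smul,
      TensorProduct.tmul_neg, smul_neg, neg_neg, map_neg]
    simp only [ht, map_neg, smul_neg]
    match_scalars <;> first | ring1 | (ring_nf; simp [Complex.I_sq]; try ring1)
  have hKe''m : ∀ (c : ℂ) (u : V ⊗[ℂ] W), (TensorProduct.map θV θW) u = -u →
      K ((1/2 : ℂ) • (c ⊗ₜ[ℝ] u + (Complex.I * c) ⊗ₜ[ℝ] (Complex.I • u))) =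
        Complex.I • ((1/2 : ℂ) • (c ⊗ₜ[ℝ] u + (Complex.I * c) ⊗ₜ[ℝ] (Complex.I • u))) := by
    intro c u hu
    simp only [map_smul, map_add, hK]
    simp only [map_smul, hu, smul_smul, Complex.I_mul_I, neg_one_smul,
      TensorProduct.tmul_neg, smul_neg, neg_neg, map_neg]
    simp only [ht, map_neg, smul_neg]
    match_scalars <;> first | ring1 | (ring_nf; simp [Complex.I_sq]; try ring1)
  -- θ on homogeneous simple tensors
  have hθpp : ∀ v ∈ Vp, ∀ w ∈ Wp, (TensorProduct.map θV θW) (v ⊗ₜ[ℂ] w) = v ⊗ₜ[ℂ] w := by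
    intro v hv w hw
    rw [TensorProduct.map_tmul, hθVp v hv, hθWp w hw]
  have hθpm : ∀ v ∈ Vp, ∀ w ∈ Wm, (TensorProduct.map θV θW) (v ⊗ₜ[ℂ] w) = -(v ⊗ₜ[ℂ] w) := by
    intro v hv w hw
    rw [TensorProduct.map_tmul, hθVp v hv, hθWm w hw, TensorProduct.tmul_neg]
  have hθmp : ∀ v ∈ Vm, ∀ w ∈ Wp, (TensorProduct.map θV θW) (v ⊗ₜ[ℂ] w) = -(v ⊗ₜ[ℂ] w) := by
    intro v hv w hw
    rw [TensorProduct.map_tmul, hθVm v hv, hθWp w hw, TensorProduct.neg_tmul]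
  have hθmm : ∀ v ∈ Vm, ∀ w ∈ Wm, (TensorProduct.map θV θW) (v ⊗ₜ[ℂ] w) = v ⊗ₜ[ℂ] w := by
    intro v hv w hw
    rw [TensorProduct.map_tmul, hθVm v hv, hθWm w hw, TensorProduct.neg_tmul,
      TensorProduct.tmul_neg, neg_neg]
  -- eigenvalue property on each image2 piece
  have main : ∀ (pV : (ℂ ⊗[ℝ] V) →ₗ[ℂ] (ℂ ⊗[ℝ] V)) (pW : (ℂ ⊗[ℝ] W) →ₗ[ℂ] (ℂ ⊗[ℝ] W))
      (UV : Submodule ℂ V) (UW : Submodule ℂ W) (μ : ℂ),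
      (∀ (z b : ℂ) (v : V) (w : W), v ∈ UV → w ∈ UW →
        K (Φ (pV (z ⊗ₜ[ℝ] v)) (pW (b ⊗ₜ[ℝ] w))) = μ • Φ (pV (z ⊗ₜ[ℝ] v)) (pW (b ⊗ₜ[ℝ] w))) →
      ∀ x ∈ Set.image2 (fun x y => Φ x y)
          (primePart pV UV : Set (ℂ ⊗[ℝ] V)) (primePart pW UW : Set (ℂ ⊗[ℝ] W)),
        K x = μ • x := by
    intro pV pW UV UW μ hbase x hx
    obtain ⟨a, ha, b, hb, rfl⟩ := hx
    rw [SetLike.mem_coe] at ha hb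
    simp only [primePart, Submodule.mem_map] at ha hb
    obtain ⟨a0, ha0, rfl⟩ := ha
    obtain ⟨b0, hb0, rfl⟩ := hb
    exact aux_span ((Φ.comp pV).compl₂ pW) K μ _ _
      (fun s hs t htt => by
        obtain ⟨z, v, hv, rfl⟩ := hs
        obtain ⟨b', w, hw, rfl⟩ := htt
        exact hbase z b' v w hv hw) a0 ha0 b0 hb0
  -- eigenvalue property on Splus and Sminus
  have hplusker : Splus ≤ LinearMap.ker (K - Complex.I • LinearMap.id) := by
    rw [hSplus, Submodule.span_le]
    intro x hx
    rw [SetLike.mem_coe, LinearMap.mem_ker, LinearMap.sub_apply, LinearMap.smul_apply,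
      LinearMap.id_apply, sub_eq_zero]
    rcases hx with ((hx | hx) | hx) | hx
    · exact main p'V p'W Vp Wp Complex.I
        (fun z b v w hv hw => by rw [hPhi']; exact hKe'p _ _ (hθpp v hv w hw)) x hx
    · exact main p''V p''W Vp Wm Complex.I
        (fun z b v w hv hw => by rw [hPhi'']; exact hKe''m _ _ (hθpm v hv w hw)) x hx
    · exact main p''V p''W Vm Wp Complex.I
        (fun z b v w hv hw => by rw [hPhi'']; exact hKe''m _ _ (hθmp v hv w hw)) x hx
    · exact main p'V p'W Vm Wm Complex.I
        (fun z b v w hv hw => by rw [hPhi']; exact hKe'p _ _ (hθmm v hv w hw)) x hx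
  have hminusker : Sminus ≤ LinearMap.ker (K - (-Complex.I) • LinearMap.id) := by
    rw [hSminus, Submodule.span_le]
    intro x hx
    rw [SetLike.mem_coe, LinearMap.mem_ker, LinearMap.sub_apply, LinearMap.smul_apply,
      LinearMap.id_apply, sub_eq_zero]
    rcases hx with ((hx | hx) | hx) | hx
    · exact main p''V p''W Vp Wp (-Complex.I)
        (fun z b v w hv hw => by rw [hPhi'']; exact hKe''p _ _ (hθpp v hv w hw)) x hx
    · exact main p'V p'W Vp Wm (-Complex.I)
        (fun z b v w hv hw => by rw [hPhi']; exact hKe'm _ _ (hθpm v hv w hw)) x hx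
    · exact main p'V p'W Vm Wp (-Complex.I)
        (fun z b v w hv hw => by rw [hPhi']; exact hKe'm _ _ (hθmp v hv w hw)) x hx
    · exact main p''V p''W Vm Wm (-Complex.I)
        (fun z b v w hv hw => by rw [hPhi'']; exact hKe''p _ _ (hθmm v hv w hw)) x hx
  have hplus : ∀ x ∈ Splus, K x = Complex.I • x := by
    intro x hx
    have := hplusker hx
    rwa [LinearMap.mem_ker, LinearMap.sub_apply, LinearMap.smul_apply, LinearMap.id_apply,
      sub_eq_zero] at this
  have hminus : ∀ x ∈ Sminus, K x = (-Complex.I) • x := by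
    intro x hx
    have := hminusker hx
    rwa [LinearMap.mem_ker, LinearMap.sub_apply, LinearMap.smul_apply, LinearMap.id_apply,
      sub_eq_zero] at this
  -- generators of Splus and Sminus
  have hgen : ∀ (pV : (ℂ ⊗[ℝ] V) →ₗ[ℂ] (ℂ ⊗[ℝ] V)) (pW : (ℂ ⊗[ℝ] W) →ₗ[ℂ] (ℂ ⊗[ℝ] W))
      (UV : Submodule ℂ V) (UW : Submodule ℂ W) (z : ℂ) (v : V) (w : W),
      v ∈ UV → w ∈ UW →
      Φ (pV (z ⊗ₜ[ℝ] v)) (pW ((1:ℂ) ⊗ₜ[ℝ] w)) ∈ Set.image2 (fun x y => Φ x y)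
        (primePart pV UV : Set (ℂ ⊗[ℝ] V)) (primePart pW UW : Set (ℂ ⊗[ℝ] W)) := by
    intro pV pW UV UW z v w hv hw
    refine Set.mem_image2_of_mem ?_ ?_
    · exact Submodule.mem_map.mpr ⟨z ⊗ₜ[ℝ] v, Submodule.subset_span ⟨z, v, hv, rfl⟩, rfl⟩
    · exact Submodule.mem_map.mpr ⟨(1:ℂ) ⊗ₜ[ℝ] w, Submodule.subset_span ⟨1, w, hw, rfl⟩, rfl⟩
  -- splitting of a simple tensor
  have hsplit : ∀ (z : ℂ) (v : V) (w : W),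
      z ⊗ₜ[ℝ] (v ⊗ₜ[ℂ] w) = Φ (p'V (z ⊗ₜ[ℝ] v)) (p'W ((1:ℂ) ⊗ₜ[ℝ] w))
        + Φ (p''V (z ⊗ₜ[ℝ] v)) (p''W ((1:ℂ) ⊗ₜ[ℝ] w)) := by
    intro z v w
    rw [hPhi', hPhi'']
    simp only [mul_one, ht]
    module
  -- the two spaces span everything
  have htop : Splus ⊔ Sminus = ⊤ := by
    rw [eq_top_iff]
    rintro x -
    induction x using TensorProduct.induction_on with
    | zero => exact zero_mem _
    | tmul z u =>
      induction u using TensorProduct.induction_on with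
      | zero => rw [TensorProduct.tmul_zero]; exact zero_mem _
      | tmul v w =>
        obtain ⟨vp, hvp, vm, hvm, hv⟩ := Submodule.mem_sup.mp
          (show v ∈ Vp ⊔ Vm by rw [hVcompl.sup_eq_top]; exact Submodule.mem_top)
        obtain ⟨wp, hwp, wm, hwm, hw⟩ := Submodule.mem_sup.mp
          (show w ∈ Wp ⊔ Wm by rw [hWcompl.sup_eq_top]; exact Submodule.mem_top)
        rw [← hv, ← hw]
        simp only [TensorProduct.add_tmul, TensorProduct.tmul_add]
        refine add_mem (add_mem ?_ ?_) (add_mem ?_ ?_)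
        · rw [hsplit]
          refine add_mem (Submodule.mem_sup_left ?_) (Submodule.mem_sup_right ?_)
          · rw [hSplus]
            refine Submodule.subset_span ?_
            simp only [Set.mem_union]
            exact Or.inl (Or.inl (Or.inl (hgen p'V p'W Vp Wp z vp wp hvp hwp)))
          · rw [hSminus]
            refine Submodule.subset_span ?_
            simp only [Set.mem_union]
            exact Or.inl (Or.inl (Or.inl (hgen p''V p''W Vp Wp z vp wp hvp hwp)))
        · rw [hsplit]
          refine add_mem (Submodule.mem_sup_right ?_) (Submodule.mem_sup_left ?_)
          · rw [hSminus]
            refine Submodule.subset_span ?_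
            simp only [Set.mem_union]
            exact Or.inl (Or.inr (hgen p'V p'W Vm Wp z vm wp hvm hwp))
          · rw [hSplus]
            refine Submodule.subset_span ?_
            simp only [Set.mem_union]
            exact Or.inl (Or.inr (hgen p''V p''W Vm Wp z vm wp hvm hwp))
        · rw [hsplit]
          refine add_mem (Submodule.mem_sup_right ?_) (Submodule.mem_sup_left ?_)
          · rw [hSminus]
            refine Submodule.subset_span ?_
            simp only [Set.mem_union]
            exact Or.inl (Or.inl (Or.inr (hgen p'V p'W Vp Wm z vp wm hvp hwm)))
          · rw [hSplus]
            refine Submodule.subset_span ?_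
            simp only [Set.mem_union]
            exact Or.inl (Or.inl (Or.inr (hgen p''V p''W Vp Wm z vp wm hvp hwm)))
        · rw [hsplit]
          refine add_mem (Submodule.mem_sup_left ?_) (Submodule.mem_sup_right ?_)
          · rw [hSplus]
            refine Submodule.subset_span ?_
            simp only [Set.mem_union]
            exact Or.inr (hgen p'V p'W Vm Wm z vm wm hvm hwm)
          · rw [hSminus]
            refine Submodule.subset_span ?_
            simp only [Set.mem_union]
            exact Or.inr (hgen p''V p''W Vm Wm z vm wm hvm hwm)
      | add u₁ u₂ h₁ h₂ =>
        rw [TensorProduct.tmul_add]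
        exact add_mem h₁ h₂
    | add x y hx hy => exact add_mem hx hy
  -- cancellation
  have cancel : ∀ b : ℂ ⊗[ℝ] (V ⊗[ℂ] W), Complex.I • b = (-Complex.I) • b → b = 0 := by
    intro b hb
    have h2 : (Complex.I + Complex.I) • b = 0 := by
      rw [add_smul]
      nth_rewrite 2 [hb]
      module
    rcases smul_eq_zero.mp h2 with h | h
    · exfalso
      apply Complex.I_ne_zero
      have h4 : (2 : ℂ) * Complex.I = 0 := by rw [two_mul]; exact_mod_cast h
      rcases mul_eq_zero.mp h4 with h5 | h5
      · norm_num at h5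
      · exact h5
    · exact h
  have hdecompose : ∀ x : ℂ ⊗[ℝ] (V ⊗[ℂ] W), ∃ a ∈ Splus, ∃ b ∈ Sminus, a + b = x := by
    intro x
    exact Submodule.mem_sup.mp (by rw [htop]; exact Submodule.mem_top)
  refine ⟨?_, ?_, ?_⟩
  · intro x
    constructor
    · exact hplus x
    · intro hx
      obtain ⟨a, ha, b, hb, hab⟩ := hdecompose x
      have hKa := hplus a ha
      have hKb := hminus b hb
      have heq : Complex.I • a + Complex.I • b = Complex.I • a + (-Complex.I) • b := by
        rw [← smul_add, hab, ← hx, ← hab, map_add, hKa, hKb]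
      have hb0 : b = 0 := cancel b (add_left_cancel heq)
      rw [← hab, hb0, add_zero]
      exact ha
  · intro x
    constructor
    · exact hminus x
    · intro hx
      obtain ⟨a, ha, b, hb, hab⟩ := hdecompose x
      have hKa := hplus a ha
      have hKb := hminus b hb
      have heq : Complex.I • a + (-Complex.I) • b = (-Complex.I) • a + (-Complex.I) • b := by
        have h1 : K x = Complex.I • a + (-Complex.I) • b := by
          rw [← hab, map_add, hKa, hKb]
        have h2 : K x = (-Complex.I) • a + (-Complex.I) • b := by
          rw [hx, ← hab, smul_add]
        exact h1.symm.trans h2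
      have ha0 : a = 0 := by
        have := add_right_cancel heq
        exact cancel a this
      rw [← hab, ha0, zero_add]
      exact hb
  · constructor
    · rw [disjoint_iff]
      refine (Submodule.eq_bot_iff _).mpr fun x hx => ?_
      obtain ⟨hx1, hx2⟩ := Submodule.mem_inf.mp hx
      exact cancel x ((hplus x hx1).symm.trans (hminus x hx2))
    · exact codisjoint_iff.mpr htop
end
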